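/- Let A be a finite alphabet and let Σ ⊆ A^ℕ be a nonempty closed set with S(Σ) ⊆ Σ, where S is the shift map. Suppose Σ has a finite subset F such that the set {S^m(ω) : ω ∈ F, m ∈ ℕ} is dense in Σ, and suppose the complexity function p(n) of L(Σ) is unbounded. Then every word of L(Σ) is right-prolongable (so e_r(n) = 0 for all n), and lim_{n→∞} e_l(n)/p(n) = 0; in particular, the language L(Σ) is almost prolongable. (Proposition 2.11 of the paper.) -/
import Mathlib


open Filter Topology

variable {A : Type*}

/-- The set of words of `L` of length `n`. -/
def Ln (L : Set (List A)) (n : ℕ) : Set (List A) := {w | w ∈ L ∧ w.length = n}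

/-- The complexity function `p n = |L_n|`. -/
noncomputable def cplx (L : Set (List A)) (n : ℕ) : ℕ := Nat.card (Ln L n)

/-- A language is factorial if it is closed under taking contiguous subwords. -/
def IsFactorial (L : Set (List A)) : Prop := ∀ u v : List A, u ∈ L → v <:+: u → v ∈ L

/-- `w` is left-prolongable in `L`. -/
def LeftProlongable (L : Set (List A)) (w : List A) : Prop := ∃ a : A, (a :: w) ∈ L

/-- `w` is right-prolongable in `L`. -/
def RightProlongable (L : Set (List A)) (w : List A) : Prop := ∃ b : A, (w ++ [b]) ∈ L

/-- `e_l(n)`: the number of words of length `n` in `L` that are not left-prolongable. -/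
noncomputable def eL (L : Set (List A)) (n : ℕ) : ℕ :=
  Nat.card {w : List A | w ∈ Ln L n ∧ ¬ LeftProlongable L w}

/-- `e_r(n)`: the number of words of length `n` in `L` that are not right-prolongable. -/
noncomputable def eR (L : Set (List A)) (n : ℕ) : ℕ :=
  Nat.card {w : List A | w ∈ Ln L n ∧ ¬ RightProlongable L w}

/-- `L` is almost prolongable: `e_l(n)/p(n) → 0` and `e_r(n)/p(n) → 0`. -/
def AlmostProlongable (L : Set (List A)) : Prop :=
  Tendsto (fun n => (eL L n : ℝ) / (cplx L n : ℝ)) atTop (𝓝 0) ∧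
  Tendsto (fun n => (eR L n : ℝ) / (cplx L n : ℝ)) atTop (𝓝 0)

/-- The one-sided shift map on `ℕ → A`. -/
def shiftMap (ω : ℕ → A) : ℕ → A := fun i => ω (i + 1)

/-- The language of a one-sided subshift `Ω ⊆ A^ℕ`: all finite words occurring in some
element of `Ω`. -/
def subshiftLang (Ω : Set (ℕ → A)) : Set (List A) :=
  {w | ∃ ω ∈ Ω, ∃ m : ℕ, w = (List.range w.length).map fun i => ω (m + i)}


/- Auxiliary lemmas -/

lemma shiftMap_iterate_apply' {A : Type*} (ω : ℕ → A) (m i : ℕ) :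
    (shiftMap^[m] ω) i = ω (m + i) := by
  induction m generalizing ω i with
  | zero => simp
  | succ k ih =>
    rw [Function.iterate_succ_apply]
    rw [ih]
    show ω (k + i + 1) = _
    congr 1; omega

lemma subshift_right_prolong {A : Type*} {Ω : Set (ℕ → A)} {w : List A}
    (h : w ∈ subshiftLang Ω) : RightProlongable (subshiftLang Ω) w := by
  obtain ⟨ω, hω, m, hw⟩ := h
  refine ⟨ω (m + w.length), ω, hω, m, ?_⟩
  simp only [List.length_append, List.length_singleton]
  rw [List.range_succ, List.map_append, ← hw]
  simp

lemma subshift_left_prolong {A : Type*} {Ω : Set (ℕ → A)} {w : List A} {ω : ℕ → A}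
    (hω : ω ∈ Ω) {m : ℕ}
    (hw : w = (List.range w.length).map fun i => ω (m + 1 + i)) :
    LeftProlongable (subshiftLang Ω) w := by
  refine ⟨ω m, ω, hω, m, ?_⟩
  simp only [List.length_cons]
  rw [List.range_succ_eq_map, List.map_cons, List.map_map]
  have h2 : w = List.map ((fun i => ω (m + i)) ∘ Nat.succ) (List.range w.length) := by
    conv_lhs => rw [hw]
    refine List.map_congr_left fun a _ => ?_
    show ω (m + 1 + a) = ω (m + Nat.succ a)
    congr 1; omega
  rw [← h2]
  norm_num

lemma dense_occurrence {A : Type*} [TopologicalSpace A] [DiscreteTopology A]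
    {Ω F : Set (ℕ → A)}
    (hdense : Ω ⊆ closure {x | ∃ ω ∈ F, ∃ m : ℕ, x = shiftMap^[m] ω})
    {ω : ℕ → A} (hω : ω ∈ Ω) (n : ℕ) :
    ∃ f ∈ F, ∃ m : ℕ, ∀ i < n, ω i = f (m + i) := by
  have hU : IsOpen {x : ℕ → A | ∀ i < n, x i = ω i} := by
    have hEq : {x : ℕ → A | ∀ i < n, x i = ω i}
        = ⋂ i ∈ Finset.range n, (fun x : ℕ → A => x i) ⁻¹' {ω i} := by
      ext x; simp [Finset.mem_range]
    rw [hEq]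
    exact isOpen_biInter_finset fun i _ =>
      (isOpen_discrete _).preimage (continuous_apply i)
  have hmem := hdense hω
  rw [mem_closure_iff] at hmem
  obtain ⟨x, hxU, hxS⟩ := hmem _ hU (fun i _ => rfl)
  obtain ⟨f, hfF, m, rfl⟩ := hxS
  exact ⟨f, hfF, m, fun i hi => (hxU i hi).symm.trans (shiftMap_iterate_apply' f m i)⟩

lemma bad_word_prefix {A : Type*} [TopologicalSpace A] [DiscreteTopology A]
    {Ω F : Set (ℕ → A)} (hFΩ : F ⊆ Ω)
    (hdense : Ω ⊆ closure {x | ∃ ω ∈ F, ∃ m : ℕ, x = shiftMap^[m] ω})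
    {n : ℕ} {w : List A} (hw : w ∈ Ln (subshiftLang Ω) n)
    (hnp : ¬ LeftProlongable (subshiftLang Ω) w) :
    ∃ f ∈ F, w = (List.range n).map f := by
  obtain ⟨⟨ω, hω, m, hrep⟩, hlen⟩ := hw
  rcases m with _ | m
  · -- occurrence at position 0 : w is a prefix of ω
    obtain ⟨f, hfF, m', hf⟩ := dense_occurrence hdense hω n
    have hrep' : w = (List.range w.length).map fun i => f (m' + i) := by
      conv_lhs => rw [hrep]
      refine List.map_congr_left fun a ha => ?_
      rw [List.mem_range, hlen] at ha
      rw [Nat.zero_add]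
      exact hf a ha
    rcases m' with _ | m'
    · refine ⟨f, hfF, ?_⟩
      conv_lhs => rw [hrep']
      rw [hlen]
      exact List.map_congr_left fun a _ => by rw [Nat.zero_add]
    · exact absurd (subshift_left_prolong (hFΩ hfF) hrep') hnp
  · exact absurd (subshift_left_prolong hω hrep) hnp

lemma Ln_finite {A : Type*} [Finite A] (L : Set (List A)) (n : ℕ) :
    (Ln L n).Finite :=
  (List.finite_length_eq A n).subset fun _ hw => hw.2

lemma cplx_subshift_pos {A : Type*} [Finite A] {Ω : Set (ℕ → A)} (hne : Ω.Nonempty)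
    (n : ℕ) : 0 < cplx (subshiftLang Ω) n := by
  obtain ⟨ω, hω⟩ := hne
  have hmem : ((List.range n).map ω) ∈ Ln (subshiftLang Ω) n := by
    refine ⟨⟨ω, hω, 0, ?_⟩, by simp⟩
    simp
  haveI := (Ln_finite (subshiftLang Ω) n).to_subtype
  haveI : Nonempty (Ln (subshiftLang Ω) n) := ⟨⟨_, hmem⟩⟩
  exact Nat.card_pos

lemma cplx_subshift_mono {A : Type*} [Finite A] (Ω : Set (ℕ → A)) (n : ℕ) :
    cplx (subshiftLang Ω) n ≤ cplx (subshiftLang Ω) (n + 1) := by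
  haveI := (Ln_finite (subshiftLang Ω) (n + 1)).to_subtype
  have hex : ∀ w : Ln (subshiftLang Ω) n, ∃ b : A,
      ((w : List A) ++ [b]) ∈ subshiftLang Ω :=
    fun w => subshift_right_prolong w.2.1
  choose b hb using hex
  refine Nat.card_le_card_of_injective
    (fun w => (⟨(w : List A) ++ [b w], hb w, by simp [w.2.2]⟩ : Ln (subshiftLang Ω) (n+1)))
    ?_
  intro x y hxy
  have h := congrArg (fun l : Ln (subshiftLang Ω) (n+1) => (l : List A).take n) hxy
  simp only at h
  rw [List.take_left' x.2.2, List.take_left' y.2.2] at h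
  exact Subtype.ext h

lemma eL_subshift_le {A : Type*} [TopologicalSpace A] [DiscreteTopology A]
    {Ω F : Set (ℕ → A)} (hF : F.Finite) (hFΩ : F ⊆ Ω)
    (hdense : Ω ⊆ closure {x | ∃ ω ∈ F, ∃ m : ℕ, x = shiftMap^[m] ω}) (n : ℕ) :
    eL (subshiftLang Ω) n ≤ Nat.card F := by
  haveI := hF.to_subtype
  have hex : ∀ w : {w : List A | w ∈ Ln (subshiftLang Ω) n
      ∧ ¬ LeftProlongable (subshiftLang Ω) w},
      ∃ f : F, (w : List A) = (List.range n).map f := by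
    rintro ⟨w, hw, hnp⟩
    obtain ⟨f, hfF, hwf⟩ := bad_word_prefix hFΩ hdense hw hnp
    exact ⟨⟨f, hfF⟩, hwf⟩
  choose g hg using hex
  exact Nat.card_le_card_of_injective g fun x y hxy =>
    Subtype.ext (by rw [hg x, hg y, hxy])

theorem almost_prolongable_of_finite_dense_orbit
    {A : Type*} [Fintype A] [TopologicalSpace A] [DiscreteTopology A]
    (Ω : Set (ℕ → A)) (hne : Ω.Nonempty) (hcl : IsClosed Ω)
    (hinv : shiftMap '' Ω ⊆ Ω)
    (F : Set (ℕ → A)) (hF : F.Finite) (hFΩ : F ⊆ Ω)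
    (hdense : Ω ⊆ closure {x | ∃ ω ∈ F, ∃ m : ℕ, x = shiftMap^[m] ω})
    (hunb : ∀ M : ℕ, ∃ n : ℕ, M < cplx (subshiftLang Ω) n) :
    (∀ w ∈ subshiftLang Ω, RightProlongable (subshiftLang Ω) w) ∧
    (∀ n : ℕ, eR (subshiftLang Ω) n = 0) ∧
    Tendsto (fun n => (eL (subshiftLang Ω) n : ℝ) / (cplx (subshiftLang Ω) n : ℝ))
      atTop (𝓝 0) ∧
    AlmostProlongable (subshiftLang Ω) := by
  have hRP : ∀ w ∈ subshiftLang Ω, RightProlongable (subshiftLang Ω) w :=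
    fun w hw => subshift_right_prolong hw
  have heR : ∀ n : ℕ, eR (subshiftLang Ω) n = 0 := by
    intro n
    have hempty : {w : List A | w ∈ Ln (subshiftLang Ω) n
        ∧ ¬ RightProlongable (subshiftLang Ω) w} = ∅ := by
      ext w
      simp only [Set.mem_setOf_eq, Set.mem_empty_iff_false, iff_false, not_and, not_not]
      exact fun hw => hRP w hw.1
    rw [eR, hempty]
    simp
  have hp : Tendsto (cplx (subshiftLang Ω)) atTop atTop :=
    tendsto_atTop_atTop_of_monotone
      (monotone_nat_of_le_succ (cplx_subshift_mono Ω))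
      (fun b => ⟨(hunb b).choose, (hunb b).choose_spec.le⟩)
  have hKtend : Tendsto (fun n => (Nat.card F : ℝ) / (cplx (subshiftLang Ω) n : ℝ))
      atTop (𝓝 0) :=
    tendsto_const_nhds.div_atTop (tendsto_natCast_atTop_atTop.comp hp)
  have hEL : Tendsto (fun n => (eL (subshiftLang Ω) n : ℝ) / (cplx (subshiftLang Ω) n : ℝ))
      atTop (𝓝 0) := by
    refine squeeze_zero (fun n => by positivity) (fun n => ?_) hKtend
    have h1 : (0:ℝ) < (cplx (subshiftLang Ω) n : ℝ) := by
      exact_mod_cast cplx_subshift_pos hne n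
    rw [div_le_div_iff_of_pos_right h1]
    exact_mod_cast eL_subshift_le hF hFΩ hdense n
  refine ⟨hRP, heR, hEL, hEL, ?_⟩
  have : (fun n => (eR (subshiftLang Ω) n : ℝ) / (cplx (subshiftLang Ω) n : ℝ))
      = fun _ => (0:ℝ) := by
    funext n; rw [heR n]; simp
  rw [this]
  exact tendsto_const_nhds
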